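/- Let l > 1 and let f(x) := x^l − 1. Let F be a finite set of cardinality N ≥ 1 and let P_θ, θ∈F, be probability measures on a measurable space 𝒳 dominated by a σ-finite measure μ. Then the uniform-prior Bayes testing risk satisfies r̄ ≥ 1 − ( 1/N^{l−1} + inf_Q Σ_{θ∈F} D_f(P_θ||Q) / N^l )^{1/l}, where the infimum is over all probability measures Q on 𝒳. -/

import Mathlib

open MeasureTheory Real
open scoped ENNReal NNReal

/-- The `f`-divergence `D_f(P‖Q) = ∫ f(dP/dQ) dQ` (real-valued; meaningful when `P ≪ Q`
and the integrand is integrable, in which case it agrees with the usual definition;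
otherwise the usual `D_f` is `+∞` and the bound is trivially true). -/
noncomputable def fDivR {X : Type*} [MeasurableSpace X] (f : ℝ → ℝ) (P Q : Measure X) : ℝ :=
  ∫ x, f ((P.rnDeriv Q x).toReal) ∂Q

noncomputable def bayesRisk {X F : Type*} [MeasurableSpace X] [Fintype F]
    (P : F → Measure X) : ℝ :=
  ⨅ T : {T : X → F // ∀ θ, MeasurableSet {x | T x = θ}},
    (Fintype.card F : ℝ)⁻¹ * ∑ θ, (P θ {x | T.1 x ≠ θ}).toReal

/-!
With `p_θ = dP_θ/dQ` and a test `T`, the success probabilities add up to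
`∑_θ P_θ {T = θ} = ∫ p_{T x}(x) dQ`. Since `Q` is a probability measure, Jensen bounds this by
`(∫ p_{T x}(x)^l dQ)^(1/l) ≤ (∑_θ ∫ p_θ^l dQ)^(1/l)`, and `∑_θ ∫ p_θ^l dQ = N + ∑_θ D_f(P_θ‖Q)`.
-/

open Finset

lemma lintegral_le_lintegral_rpow_one_div {α : Type*} [MeasurableSpace α] {μ : Measure α}
    [IsProbabilityMeasure μ] {f : α → ℝ≥0∞} {l : ℝ} (hl : 1 ≤ l) (hf : AEMeasurable f μ) :
    ∫⁻ x, f x ∂μ ≤ (∫⁻ x, f x ^ l ∂μ) ^ (1 / l) := by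
  simpa [eLpNorm'_eq_lintegral_enorm] using
    eLpNorm'_le_eLpNorm'_of_exponent_le one_pos hl μ hf.aestronglyMeasurable

lemma lintegral_comp_le_sum_lintegral {α ι : Type*} [MeasurableSpace α] [Fintype ι]
    {μ : Measure α} {g : ι → α → ℝ≥0∞} (hg : ∀ i, AEMeasurable (g i) μ) (T : α → ι) :
    ∫⁻ x, g (T x) x ∂μ ≤ ∑ i, ∫⁻ x, g i x ∂μ := by
  rw [← lintegral_finsetSum' _ fun i _ => hg i]
  exact lintegral_mono fun x =>
    single_le_sum (f := fun i => g i x) (fun i _ => zero_le) (mem_univ (T x))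

section Tests

variable {X F : Type*} [Fintype F] {T : X → F}

lemma sum_indicator_fiber {M : Type*} [AddCommMonoid M] (g : F → X → M) (x : X) :
    ∑ θ, {y | T y = θ}.indicator (g θ) x = g (T x) x :=
  (sum_eq_single_of_mem (T x) (mem_univ _) fun _ _ hθ =>
    Set.indicator_of_notMem (fun hx => hθ hx.symm) _).trans
    (Set.indicator_of_mem (show x ∈ {y | T y = T x} from rfl) _)

variable [MeasurableSpace X]

lemma measurable_comp_of_measurableSet_fiber (hT : ∀ θ, MeasurableSet {x | T x = θ})
    {g : F → X → ℝ≥0∞} (hg : ∀ θ, Measurable (g θ)) :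
    Measurable fun x => g (T x) x := by
  simp_rw [← sum_indicator_fiber g]
  exact Finset.measurable_sum _ fun θ _ => (hg θ).indicator (hT θ)

lemma lintegral_comp_eq_sum_setLIntegral (hT : ∀ θ, MeasurableSet {x | T x = θ})
    {μ : Measure X} {g : F → X → ℝ≥0∞} (hg : ∀ θ, Measurable (g θ)) :
    ∫⁻ x, g (T x) x ∂μ = ∑ θ, ∫⁻ x in {x | T x = θ}, g θ x ∂μ := by
  simp_rw [← sum_indicator_fiber g]
  rw [lintegral_finsetSum _ fun θ _ => (hg θ).indicator (hT θ)]
  simp_rw [lintegral_indicator (hT _)]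

variable {P : F → Measure X} {Q : Measure X}

lemma sum_measure_fiber_eq_lintegral_rnDeriv (hT : ∀ θ, MeasurableSet {x | T x = θ})
    [∀ θ, (P θ).HaveLebesgueDecomposition Q] [SFinite Q] (hPQ : ∀ θ, P θ ≪ Q) :
    ∑ θ, P θ {x | T x = θ} = ∫⁻ x, (P (T x)).rnDeriv Q x ∂Q := by
  rw [lintegral_comp_eq_sum_setLIntegral hT fun θ => Measure.measurable_rnDeriv _ _]
  simp_rw [Measure.setLIntegral_rnDeriv (hPQ _)]

theorem sum_measure_fiber_le_lintegral_rnDeriv_rpow (hT : ∀ θ, MeasurableSet {x | T x = θ})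
    [∀ θ, (P θ).HaveLebesgueDecomposition Q] [IsProbabilityMeasure Q] (hPQ : ∀ θ, P θ ≪ Q)
    {l : ℝ} (hl : 1 ≤ l) :
    ∑ θ, P θ {x | T x = θ} ≤ (∑ θ, ∫⁻ x, (P θ).rnDeriv Q x ^ l ∂Q) ^ (1 / l) := by
  have hp : ∀ θ, Measurable ((P θ).rnDeriv Q) := fun θ => Measure.measurable_rnDeriv _ _
  calc ∑ θ, P θ {x | T x = θ} = ∫⁻ x, (P (T x)).rnDeriv Q x ∂Q :=
        sum_measure_fiber_eq_lintegral_rnDeriv hT hPQ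
    _ ≤ (∫⁻ x, (P (T x)).rnDeriv Q x ^ l ∂Q) ^ (1 / l) :=
        lintegral_le_lintegral_rpow_one_div hl
          (measurable_comp_of_measurableSet_fiber hT hp).aemeasurable
    _ ≤ (∑ θ, ∫⁻ x, (P θ).rnDeriv Q x ^ l ∂Q) ^ (1 / l) := by
        gcongr
        exact lintegral_comp_le_sum_lintegral (fun θ => ((hp θ).pow_const l).aemeasurable) T

end Tests

section RealValued

variable {X : Type*} [MeasurableSpace X] {P Q : Measure X} {l : ℝ}

lemma lintegral_rnDeriv_rpow_eq_ofReal [SigmaFinite P] (hl : 0 ≤ l)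
    (hInt : Integrable (fun x => (P.rnDeriv Q x).toReal ^ l) Q) :
    ∫⁻ x, P.rnDeriv Q x ^ l ∂Q = ENNReal.ofReal (∫ x, (P.rnDeriv Q x).toReal ^ l ∂Q) := by
  rw [ofReal_integral_eq_lintegral_ofReal hInt (ae_of_all _ fun _ => by positivity)]
  refine lintegral_congr_ae ?_
  filter_upwards [Measure.rnDeriv_lt_top P Q] with x hx
  rw [← ENNReal.ofReal_rpow_of_nonneg ENNReal.toReal_nonneg hl, ENNReal.ofReal_toReal hx.ne]

lemma fDivR_rpow_sub_one [IsProbabilityMeasure Q]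
    (hInt : Integrable (fun x => (P.rnDeriv Q x).toReal ^ l) Q) :
    fDivR (fun t => t ^ l - 1) P Q = ∫ x, (P.rnDeriv Q x).toReal ^ l ∂Q - 1 := by
  simp [fDivR, integral_sub hInt (integrable_const 1)]

end RealValued

theorem sum_measure_fiber_toReal_le {X F : Type*} [MeasurableSpace X] [Fintype F] {T : X → F}
    (hT : ∀ θ, MeasurableSet {x | T x = θ}) {P : F → Measure X} {Q : Measure X}
    [∀ θ, IsFiniteMeasure (P θ)] [IsProbabilityMeasure Q] (hPQ : ∀ θ, P θ ≪ Q)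
    {l : ℝ} (hl : 1 ≤ l) (hInt : ∀ θ, Integrable (fun x => ((P θ).rnDeriv Q x).toReal ^ l) Q) :
    ∑ θ, (P θ {x | T x = θ}).toReal ≤
      (∑ θ, ∫ x, ((P θ).rnDeriv Q x).toReal ^ l ∂Q) ^ (1 / l) := by
  have h := sum_measure_fiber_le_lintegral_rnDeriv_rpow hT hPQ hl
  simp_rw [lintegral_rnDeriv_rpow_eq_ofReal (zero_le_one.trans hl) (hInt _)] at h
  rw [← ENNReal.ofReal_sum_of_nonneg fun θ _ => integral_nonneg fun x => by positivity,
    ENNReal.ofReal_rpow_of_nonneg (sum_nonneg fun θ _ => integral_nonneg fun x => by positivity)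
      (by positivity)] at h
  rw [← ENNReal.toReal_sum fun θ _ => measure_ne_top _ _]
  exact ENNReal.toReal_le_of_le_ofReal (by positivity) h

lemma one_sub_div_card_le_bayesRisk {X F : Type*} [MeasurableSpace X] [Fintype F] [Nonempty F]
    {P : F → Measure X} [∀ θ, IsProbabilityMeasure (P θ)] {s : ℝ}
    (h : ∀ T : X → F, (∀ θ, MeasurableSet {x | T x = θ}) →
      ∑ θ, (P θ {x | T x = θ}).toReal ≤ s) :
    1 - s / Fintype.card F ≤ bayesRisk P := by
  have hN : (0 : ℝ) < Fintype.card F := Nat.cast_pos.2 Fintype.card_pos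
  have : Nonempty {T : X → F // ∀ θ, MeasurableSet {x | T x = θ}} :=
    ⟨⟨fun _ => Classical.arbitrary F, fun θ => MeasurableSet.const _⟩⟩
  refine le_ciInf fun ⟨T, hT⟩ => ?_
  have hcompl : ∀ θ, (P θ {x | T x ≠ θ}).toReal = 1 - (P θ {x | T x = θ}).toReal := fun θ =>
    probReal_compl_eq_one_sub (hT θ)
  simp only [hcompl, sum_sub_distrib, sum_const, card_univ, nsmul_eq_mul, mul_one]
  rw [mul_sub, inv_mul_cancel₀ hN.ne', inv_mul_eq_div]
  gcongr
  exact h T hT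

lemma one_div_rpow_sub_one_add_sub_div_rpow {N S l : ℝ} (hN : 0 < N) (hS : 0 ≤ S) (hl : l ≠ 0) :
    (1 / N ^ (l - 1) + (S - N) / N ^ l) ^ (1 / l) = S ^ (1 / l) / N := by
  have : 1 / N ^ (l - 1) = N / N ^ l := by
    rw [rpow_sub hN, rpow_one]
    field_simp
  rw [this, ← add_div, add_sub_cancel, div_rpow hS (by positivity), ← rpow_mul hN.le,
    mul_one_div_cancel hl, rpow_one]

theorem statement11_general {X F : Type*} [MeasurableSpace X] [Fintype F] [Nonempty F]
    (l : ℝ) (hl : 1 < l)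
    (P : F → Measure X) (hPprob : ∀ θ, IsProbabilityMeasure (P θ))
    (N : ℝ) (hN : N = Fintype.card F)
    (Q : Measure X) [IsProbabilityMeasure Q]
    (hAC : ∀ θ, P θ ≪ Q)
    (hInt : ∀ θ, Integrable (fun x => ((P θ).rnDeriv Q x).toReal ^ l) Q) :
    1 - (1 / N ^ (l - 1) +
        (∑ θ, fDivR (fun t => t ^ l - 1) (P θ) Q) / N ^ l) ^ (1 / l) ≤
      bayesRisk P := by
  have hN0 : 0 < N := hN ▸ Nat.cast_pos.2 Fintype.card_pos
  have hdiv : ∑ θ, fDivR (fun t => t ^ l - 1) (P θ) Q =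
      ∑ θ, ∫ x, ((P θ).rnDeriv Q x).toReal ^ l ∂Q - N := by
    simp [fDivR_rpow_sub_one (hInt _), sum_sub_distrib, hN]
  rw [hdiv, one_div_rpow_sub_one_add_sub_div_rpow hN0
    (sum_nonneg fun θ _ => integral_nonneg fun x => by positivity) (by positivity), hN]
  exact one_sub_div_card_le_bayesRisk fun T hT => sum_measure_fiber_toReal_le hT hAC hl.le hInt

/-- Example 5, `f(x) = x^l - 1` with `l > 1`:
`r̄ ≥ 1 - (1/N^(l-1) + inf_Q Σ_θ D_f(P_θ‖Q) / N^l)^(1/l)`; the infimum over `Q` is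
expressed by universally quantifying over probability measures `Q`. -/
theorem statement11 {X F : Type*} [MeasurableSpace X] [Fintype F] [Nonempty F]
    (l : ℝ) (hl : 1 < l)
    (μ : Measure X) [SigmaFinite μ]
    (P : F → Measure X) (hPdom : ∀ θ, P θ ≪ μ) (hPprob : ∀ θ, IsProbabilityMeasure (P θ))
    (N : ℝ) (hN : N = Fintype.card F)
    (Q : Measure X) [IsProbabilityMeasure Q]
    (hAC : ∀ θ, P θ ≪ Q)
    (hInt : ∀ θ, Integrable (fun x => ((P θ).rnDeriv Q x).toReal ^ l) Q) :
    1 - (1 / N ^ (l - 1) +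
        (∑ θ, fDivR (fun t => t ^ l - 1) (P θ) Q) / N ^ l) ^ (1 / l) ≤
      bayesRisk P :=
  statement11_general l hl P hPprob N hN Q hAC hInt
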